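/- arXiv:1801.02932 — 4 statements merged into one kernel-verified Lean document; each statement's English description precedes it below -/
import Mathlib

section
/- Let R be a commutative ring that is a ℚ-algebra, let g(x) = c_0 + c_1 x + ⋯ + c_l x^l ∈ R[x] be a polynomial of degree at most l, and let f_0 ∈ R. For 1 ≤ m ≤ l+1 define f_m = ∑_{k=0}^{l+1-m} (c_{m+k-1}/(m+k)) · B_k · C(m+k, k) ∈ R, where B_k denotes the k-th Bernoulli number and C(·,·) the binomial coefficient. Then the polynomial f(x) = f_0 + f_1 x + ⋯ + f_{l+1} x^{l+1} ∈ R[x] satisfies f(0) = f_0 and f(x+1) = f(x) + g(x) for every natural number x ≥ 0. -/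
/-!
Faulhaber's formula `∑_{t<x} t^j = (1/(j+1)) ∑_{i≤j} B_i C(j+1,i) x^(j+1-i)` shows, after
collecting the coefficient of each power `x^m` (put `j = m + k - 1`), that `f(x) = f₀ + ∑_{t<x} g(t)`
for every natural number `x`; both claims follow at once.
-/

open Polynomial Finset

theorem sum_Icc_one_sum_range_eq_sum_range_sum_range {M : Type*} [AddCommMonoid M] (l : ℕ)
    (a : ℕ → ℕ → M) :
    ∑ m ∈ Icc 1 (l + 1), ∑ k ∈ range (l + 2 - m), a m k =
      ∑ j ∈ range (l + 1), ∑ k ∈ range (j + 1), a (j + 1 - k) k := by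
  rw [← Ico_add_one_right_eq_Icc, sum_Ico_eq_sum_range]
  calc ∑ m ∈ range (l + 1 + 1 - 1), ∑ k ∈ range (l + 2 - (1 + m)), a (1 + m) k
      = ∑ m ∈ range (l + 1), ∑ k ∈ range (l + 1 - m), a (m + 1) k := by
        refine sum_congr rfl fun m _ => ?_
        rw [add_comm 1 m, show l + 2 - (m + 1) = l + 1 - m by omega]
    _ = ∑ j ∈ range (l + 1), ∑ i ∈ range (j + 1), a (i + 1) (j - i) :=
        (sum_range_diag_flip (l + 1) fun m k => a (m + 1) k).symm
    _ = ∑ j ∈ range (l + 1), ∑ k ∈ range (j + 1), a (j + 1 - k) k := by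
        refine sum_congr rfl fun j _ => ?_
        rw [← sum_range_reflect]
        refine sum_congr rfl fun k hk => ?_
        rw [mem_range] at hk
        congr 1 <;> omega

section

variable {R : Type*} [CommRing R] [Algebra ℚ R]

theorem sum_range_pow_eq_sum_bernoulli (n p : ℕ) :
    ∑ t ∈ range n, (t : R) ^ p =
      ∑ i ∈ range (p + 1),
        algebraMap ℚ R (_root_.bernoulli i * (p + 1).choose i / (p + 1)) * (n : R) ^ (p + 1 - i) := by
  have := congrArg (algebraMap ℚ R) (sum_range_pow n p)
  simp only [map_sum, map_pow, map_natCast] at this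
  rw [this]
  refine sum_congr rfl fun i _ => ?_
  rw [mul_div_right_comm, map_mul, map_pow, map_natCast]

theorem sum_Icc_bernoulli_mul_pow_eq_sum_range_sum_pow (l : ℕ) (c : ℕ → R) (x : ℕ) :
    ∑ m ∈ Icc 1 (l + 1), (∑ k ∈ range (l + 2 - m),
        algebraMap ℚ R (_root_.bernoulli k * ((m + k).choose k : ℚ) / (m + k)) * c (m + k - 1)) *
          (x : R) ^ m =
      ∑ t ∈ range x, ∑ j ∈ range (l + 1), c j * (t : R) ^ j := by
  simp_rw [sum_mul]
  rw [sum_Icc_one_sum_range_eq_sum_range_sum_range, sum_comm]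
  refine sum_congr rfl fun j _ => ?_
  rw [← mul_sum, sum_range_pow_eq_sum_bernoulli, mul_sum]
  refine sum_congr rfl fun k hk => ?_
  have hkj : k ≤ j := Nat.lt_succ_iff.mp (mem_range.mp hk)
  have hm : ((j + 1 - k : ℕ) : ℚ) + k = j + 1 := by
    rw [Nat.cast_sub (by omega)]; push_cast; ring
  rw [hm, Nat.sub_add_cancel (by omega : k ≤ j + 1), Nat.add_sub_cancel]
  ring

end

/-- Lemma 3.2 (recursion form): if `g = c₀ + c₁ x + ⋯ + c_l x^l ∈ R[x]`, `f₀ ∈ R`, and for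
`1 ≤ m ≤ l+1` we set `f_m = ∑_{k=0}^{l+1-m} (c_{m+k-1} / (m+k)) · B_k · C(m+k, k)`, then
`f = f₀ + f₁ x + ⋯ + f_{l+1} x^{l+1}` satisfies `f(0) = f₀` and `f(x+1) = f(x) + g(x)`
for every natural number `x`. -/
theorem bernoulli_solves_recursion (R : Type*) [CommRing R] [Algebra ℚ R]
    (l : ℕ) (c : ℕ → R) (f0 : R)
    (g : Polynomial R)
    (hg : g = ∑ k ∈ range (l + 1), C (c k) * X ^ k)
    (fm : ℕ → R)
    (hfm : ∀ m, 1 ≤ m → m ≤ l + 1 →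
      fm m = ∑ k ∈ range (l + 2 - m),
        algebraMap ℚ R (_root_.bernoulli k * ((m + k).choose k : ℚ) / (m + k)) * c (m + k - 1))
    (f : Polynomial R)
    (hf : f = C f0 + ∑ m ∈ Icc 1 (l + 1), C (fm m) * X ^ m) :
    f.eval 0 = f0 ∧ ∀ x : ℕ, f.eval ((x : R) + 1) = f.eval (x : R) + g.eval (x : R) := by
  have eval_f : ∀ x : ℕ, f.eval (x : R) = f0 + ∑ t ∈ range x, g.eval (t : R) := by
    intro x
    have hfm_sum : ∑ m ∈ Icc 1 (l + 1), fm m * (x : R) ^ m = ∑ m ∈ Icc 1 (l + 1),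
        (∑ k ∈ range (l + 2 - m), algebraMap ℚ R
          (_root_.bernoulli k * ((m + k).choose k : ℚ) / (m + k)) * c (m + k - 1)) * (x : R) ^ m :=
      sum_congr rfl fun m hm => by rw [hfm m (mem_Icc.mp hm).1 (mem_Icc.mp hm).2]
    simp only [hf, hg, eval_add, eval_finsetSum, eval_mul, eval_C, eval_pow, eval_X, hfm_sum,
      sum_Icc_bernoulli_mul_pow_eq_sum_range_sum_pow]
  refine ⟨by simpa using eval_f 0, fun x => ?_⟩
  have eval_succ := eval_f (x + 1)
  push_cast at eval_succ
  rw [eval_succ, eval_f x, sum_range_succ, add_assoc]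
end

section
/- Let R be a commutative ring that is a ℚ-algebra, let g(x) = c_0 + c_1 x + ⋯ + c_l x^l ∈ R[x] and f_0 ∈ R, and for 1 ≤ m ≤ l+1 define f_m = ∑_{k=0}^{l+1-m} (c_{m+k-1}/(m+k)) · B_k · C(m+k, k) ∈ R, where B_k denotes the k-th Bernoulli number. Then the polynomial f(x) = f_0 + f_1 x + ⋯ + f_{l+1} x^{l+1} satisfies f(x) = f_0 + ∑_{i=0}^{x−1} g(i) for every natural number x ≥ 0 (the empty sum for x = 0 being 0). -/
/-!
Writing `g = ∑ c_j X^j`, the sum `∑_{i<x} g(i)` is `∑_j c_j ∑_{i<x} i^j`, and Faulhaber's formula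
`∑_{i<x} i^j = ∑_{k ≤ j} B_k C(j+1,k)/(j+1) · x^(j+1-k)` turns it into a polynomial in `x`.
Collecting the terms by the power `m = j + 1 - k` of `x` gives exactly the coefficients `f_m`.
-/

open Polynomial Finset

theorem Finset.sum_range_sum_range_sub {M : Type*} [AddCommMonoid M] (n : ℕ) (F : ℕ → ℕ → M) :
    ∑ m ∈ range n, ∑ k ∈ range (n - m), F m k = ∑ j ∈ range n, ∑ k ∈ range (j + 1), F (j - k) k := by
  rw [← sum_range_diag_flip]
  refine sum_congr rfl fun j _ => ?_
  rw [← sum_range_reflect]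
  refine sum_congr rfl fun k hk => ?_
  rw [mem_range] at hk
  congr 2; omega

theorem sum_range_pow_eq_bernoulli (R : Type*) [CommRing R] [Algebra ℚ R] (n p : ℕ) :
    ∑ i ∈ range n, (i : R) ^ p = ∑ k ∈ range (p + 1),
      algebraMap ℚ R (_root_.bernoulli k * (p + 1).choose k / (p + 1)) * (n : R) ^ (p + 1 - k) := by
  have := congrArg (algebraMap ℚ R) (sum_range_pow n p)
  simp only [map_sum, map_pow, map_natCast] at this
  rw [this]
  refine sum_congr rfl fun k _ => ?_
  rw [← map_natCast (algebraMap ℚ R) n, ← map_pow, ← map_mul]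
  congr 1
  ring

theorem sum_Icc_bernoulli_coeff_mul_pow {R : Type*} [CommRing R] [Algebra ℚ R]
    (l : ℕ) (c : ℕ → R) (y : R) :
    ∑ m ∈ Icc 1 (l + 1), (∑ k ∈ range (l + 2 - m),
        algebraMap ℚ R (_root_.bernoulli k * ((m + k).choose k : ℚ) / (m + k)) * c (m + k - 1)) * y ^ m
      = ∑ j ∈ range (l + 1), c j * ∑ k ∈ range (j + 1),
        algebraMap ℚ R (_root_.bernoulli k * (j + 1).choose k / (j + 1)) * y ^ (j + 1 - k) := by
  rw [← Ico_add_one_right_eq_Icc, sum_Ico_eq_sum_range, Nat.add_sub_cancel]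
  simp only [sum_mul]
  convert sum_range_sum_range_sub (l + 1) fun m k =>
    algebraMap ℚ R (_root_.bernoulli k * ((1 + m + k).choose k : ℚ) / ((1 + m : ℕ) + k)) *
      c (1 + m + k - 1) * y ^ (1 + m) using 1
  · refine sum_congr rfl fun m _ => ?_
    rw [show l + 2 - (1 + m) = l + 1 - m by omega]
  · refine sum_congr rfl fun j _ => ?_
    rw [mul_sum]
    refine sum_congr rfl fun k hk => ?_
    rw [mem_range] at hk
    have hjk : 1 + (j - k) = j + 1 - k := by omega
    rw [hjk, Nat.sub_add_cancel (by omega), Nat.add_sub_cancel, Nat.cast_sub (by omega)]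
    push_cast
    ring_nf

/-- Lemma 3.2 (summation form): with `g = c₀ + c₁ x + ⋯ + c_l x^l ∈ R[x]`, `f₀ ∈ R`, and
`f_m = ∑_{k=0}^{l+1-m} (c_{m+k-1} / (m+k)) · B_k · C(m+k, k)` for `1 ≤ m ≤ l+1`, the polynomial
`f = f₀ + f₁ x + ⋯ + f_{l+1} x^{l+1}` satisfies `f(x) = f₀ + ∑_{i=0}^{x-1} g(i)` for every
natural number `x`. -/
theorem bernoulli_solves_summation (R : Type*) [CommRing R] [Algebra ℚ R]
    (l : ℕ) (c : ℕ → R) (f0 : R)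
    (g : Polynomial R)
    (hg : g = ∑ k ∈ range (l + 1), C (c k) * X ^ k)
    (fm : ℕ → R)
    (hfm : ∀ m, 1 ≤ m → m ≤ l + 1 →
      fm m = ∑ k ∈ range (l + 2 - m),
        algebraMap ℚ R (_root_.bernoulli k * ((m + k).choose k : ℚ) / (m + k)) * c (m + k - 1))
    (f : Polynomial R)
    (hf : f = C f0 + ∑ m ∈ Icc 1 (l + 1), C (fm m) * X ^ m) :
    ∀ x : ℕ, f.eval (x : R) = f0 + ∑ i ∈ range x, g.eval (i : R) := by
  intro x
  subst hg hf
  simp only [eval_add, eval_finsetSum, eval_mul, eval_C, eval_pow, eval_X]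
  congr 1
  calc ∑ m ∈ Icc 1 (l + 1), fm m * (x : R) ^ m
      = ∑ j ∈ range (l + 1), c j * ∑ k ∈ range (j + 1),
          algebraMap ℚ R (_root_.bernoulli k * (j + 1).choose k / (j + 1)) * (x : R) ^ (j + 1 - k) := by
        rw [← sum_Icc_bernoulli_coeff_mul_pow]
        refine sum_congr rfl fun m hm => ?_
        obtain ⟨hm1, hml⟩ := mem_Icc.1 hm
        rw [hfm m hm1 hml]
    _ = ∑ i ∈ range x, ∑ j ∈ range (l + 1), c j * (i : R) ^ j := by
        rw [sum_comm]
        simp only [← mul_sum, sum_range_pow_eq_bernoulli]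
end

section
/- For every family of integers t = (t_{i,j,k})_{1 ≤ i < j < k ≤ n}, the normal form map N_t : ℤ^n → G(t), (x_1, …, x_n) ↦ a_1^{x_1} ⋯ a_n^{x_n}, is surjective; that is, every element of G(t) can be written as a_1^{x_1} ⋯ a_n^{x_n} for some x ∈ ℤ^n. -/
/-!
Let `H_j = ⟨a_k : k > j⟩`. By the relations, `a_i⁻¹ a_k a_i = a_k c` with `c ∈ H_k`, so
conjugation by `a_i⁻¹` maps `H_j` into itself for `i ≤ j`; a downward induction on `j` gives the
same for conjugation by `a_i`. Hence `a_1` normalises `H_1 = ⟨a_2, …, a_n⟩`, so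
`G = ⟨a_1⟩ H_1`, and induction on the number of generators finishes.
-/

namespace HallPoly

/-- The ordered product `g_1^{e_1} ⋯ g_n^{e_n}` taken in increasing order of indices. -/
def prodPow {Γ : Type*} [Group Γ] (n : ℕ) (g : Fin n → Γ) (e : Fin n → ℤ) : Γ :=
  ((List.finRange n).map fun k => g k ^ e k).prod

/-- The relators of the presented group `G(t)`:
`(a_i · a_j · a_{j+1}^{t_{i,j,j+1}} ⋯ a_n^{t_{i,j,n}})⁻¹ · (a_j · a_i)` for `1 ≤ i < j ≤ n`. -/
def rels (n : ℕ) (t : Fin n → Fin n → Fin n → ℤ) : Set (FreeGroup (Fin n)) :=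
  { r | ∃ i j : Fin n, i < j ∧
      r = (FreeGroup.of i * FreeGroup.of j *
            prodPow n FreeGroup.of (fun k => if j < k then t i j k else 0))⁻¹ *
          (FreeGroup.of j * FreeGroup.of i) }

/-- The presented group `G(t)` with generators `a_1, …, a_n` and relations
`a_j·a_i = a_i·a_j·a_{j+1}^{t_{i,j,j+1}} ⋯ a_n^{t_{i,j,n}}` for `1 ≤ i < j ≤ n`. -/
abbrev G (n : ℕ) (t : Fin n → Fin n → Fin n → ℤ) : Type := PresentedGroup (rels n t)

/-- The generators `a_1, …, a_n` of `G(t)`. -/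
def a (n : ℕ) (t : Fin n → Fin n → Fin n → ℤ) (i : Fin n) : G n t :=
  PresentedGroup.of i

/-- The normal form map `N_t : ℤⁿ → G(t)`, `x ↦ a_1^{x_1} ⋯ a_n^{x_n}`. -/
def N (n : ℕ) (t : Fin n → Fin n → Fin n → ℤ) (x : Fin n → ℤ) : G n t :=
  prodPow n (a n t) x

open Subgroup Set Pointwise

section Polycyclic

variable {Γ : Type*} [Group Γ] {n : ℕ}

lemma prodPow_succ (g : Fin (n + 1) → Γ) (e : Fin (n + 1) → ℤ) :
    prodPow (n + 1) g e = g 0 ^ e 0 * prodPow n (Fin.tail g) (Fin.tail e) := by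
  simp [prodPow, List.finRange_succ, List.map_map, Function.comp_def, Fin.tail]

lemma map_prodPow {Δ : Type*} [Group Δ] (f : Γ →* Δ) (g : Fin n → Γ) (e : Fin n → ℤ) :
    f (prodPow n g e) = prodPow n (f ∘ g) e := by
  simp [prodPow, map_list_prod, List.map_map, Function.comp_def]

lemma prodPow_mem_closure_image (g : Fin n → Γ) {s : Set (Fin n)} {e : Fin n → ℤ}
    (he : ∀ k ∉ s, e k = 0) : prodPow n g e ∈ closure (g '' s) := by
  refine list_prod_mem fun x hx => ?_
  obtain ⟨k, -, rfl⟩ := List.mem_map.mp hx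
  by_cases hk : k ∈ s
  · exact zpow_mem (subset_closure (mem_image_of_mem g hk)) _
  · simp [he k hk]

lemma conj_mem_closure {S : Set Γ} {a x : Γ} (hS : ∀ s ∈ S, a * s * a⁻¹ ∈ closure S)
    (hx : x ∈ closure S) : a * x * a⁻¹ ∈ closure S := by
  have : closure S ≤ (closure S).comap (MulAut.conj a).toMonoidHom :=
    closure_le _ |>.mpr fun s hs => by simpa using hS s hs
  simpa using this hx

def HasPolycyclicRelations (g : Fin n → Γ) : Prop :=
  ∀ i j, i < j → ∃ c ∈ closure (g '' Ioi j), g j * g i = g i * g j * c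

namespace HasPolycyclicRelations

variable {g : Fin n → Γ}

lemma inv_conj_mem (hg : HasPolycyclicRelations g) {i j : Fin n} (hij : i ≤ j) {x : Γ}
    (hx : x ∈ closure (g '' Ioi j)) : (g i)⁻¹ * x * g i ∈ closure (g '' Ioi j) := by
  have hgen : ∀ s ∈ g '' Ioi j, (g i)⁻¹ * s * (g i)⁻¹⁻¹ ∈ closure (g '' Ioi j) := by
    rintro _ ⟨k, hjk : j < k, rfl⟩
    obtain ⟨c, hc, hrel⟩ := hg i k (hij.trans_lt hjk)
    have : (g i)⁻¹ * g k * (g i)⁻¹⁻¹ = g k * c := by rw [inv_inv, mul_assoc, hrel]; group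
    rw [this]
    exact mul_mem (subset_closure ⟨k, hjk, rfl⟩)
      (closure_mono (image_mono (Ioi_subset_Ioi hjk.le)) hc)
  simpa using conj_mem_closure hgen hx

/-- Conjugating `g k` by `g i` leaves the factor `g i c⁻¹ (g i)⁻¹` with `c ∈ ⟨g l : l > k⟩`,
so the claim for `j` reduces to the claim for the larger indices `k > j`. -/
lemma conj_mem (hg : HasPolycyclicRelations g) {i j : Fin n} (hij : i ≤ j) {x : Γ}
    (hx : x ∈ closure (g '' Ioi j)) : g i * x * (g i)⁻¹ ∈ closure (g '' Ioi j) := by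
  induction j using WellFoundedGT.induction generalizing x with
  | _ j ih =>
  refine conj_mem_closure (fun s hs => ?_) hx
  obtain ⟨k, hjk : j < k, rfl⟩ := hs
  obtain ⟨c, hc, hrel⟩ := hg i k (hij.trans_lt hjk)
  have hswap : g i * g k = g k * g i * c⁻¹ := by rw [hrel]; group
  have : g i * g k * (g i)⁻¹ = g k * (g i * c⁻¹ * (g i)⁻¹) := by rw [hswap]; group
  rw [this]
  exact mul_mem (subset_closure ⟨k, hjk, rfl⟩) <| closure_mono
    (image_mono (Ioi_subset_Ioi hjk.le)) (ih k hjk (hij.trans hjk.le) (inv_mem hc))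

lemma mem_normalizer (hg : HasPolycyclicRelations g) (i : Fin n) :
    g i ∈ normalizer (closure (g '' Ioi i) : Set Γ) := by
  refine mem_normalizer_iff.mpr fun x => ⟨hg.conj_mem le_rfl, fun hx => ?_⟩
  simpa [mul_assoc] using hg.inv_conj_mem le_rfl hx

lemma tail {g : Fin (n + 1) → Γ} (hg : HasPolycyclicRelations g) :
    HasPolycyclicRelations (Fin.tail g) := by
  intro i j hij
  obtain ⟨c, hc, hrel⟩ := hg i.succ j.succ (Fin.succ_lt_succ_iff.mpr hij)
  refine ⟨c, ?_, hrel⟩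
  change c ∈ closure ((g ∘ Fin.succ) '' Ioi j)
  rwa [image_comp, Fin.image_succ_Ioi]

lemma closure_range_subset (hg : HasPolycyclicRelations g) :
    (closure (range g) : Set Γ) ⊆ range (prodPow n g) := by
  induction n with
  | zero => simp [range_eq_empty, prodPow]
  | succ n ih =>
    have hK : closure (range (Fin.tail g)) = closure (g '' Ioi 0) := by
      change closure (range (g ∘ Fin.succ)) = _
      rw [range_comp, Fin.range_succ]
      congr 2
      ext k
      simp [Fin.pos_iff_ne_zero]
    have hsup : (closure (range g) : Set Γ) =
        (zpowers (g 0) : Set Γ) * (closure (range (Fin.tail g)) : Set Γ) := by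
      have hnorm : zpowers (g 0) ≤ normalizer (closure (range (Fin.tail g)) : Set Γ) := by
        rw [zpowers_le, hK]
        exact hg.mem_normalizer 0
      rw [Fin.range_fin_succ, insert_eq, Subgroup.closure_union, ← zpowers_eq_closure,
        coe_mul_of_left_le_normalizer_right _ _ hnorm]
    rw [hsup]
    rintro _ ⟨_, ⟨k, rfl⟩, y, hy, rfl⟩
    obtain ⟨e, rfl⟩ := ih hg.tail hy
    exact ⟨Fin.cons k e, by simp [prodPow_succ]⟩

end HasPolycyclicRelations

end Polycyclic

lemma hasPolycyclicRelations_a {n : ℕ} (t : Fin n → Fin n → Fin n → ℤ) :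
    HasPolycyclicRelations (a n t) := by
  intro i j hij
  refine ⟨prodPow n (a n t) (fun k => if j < k then t i j k else 0),
    prodPow_mem_closure_image _ fun k hk => if_neg hk, ?_⟩
  have hrel := PresentedGroup.mk_eq_mk_of_inv_mul_mem (rels := rels n t) ⟨i, j, hij, rfl⟩
  rw [map_mul, map_mul, map_mul, map_prodPow] at hrel
  exact hrel.symm

/-- Every element of `G(t)` can be written as `a_1^{x_1} ⋯ a_n^{x_n}` for some `x ∈ ℤⁿ`,
i.e. the normal form map `N_t` is surjective. -/
theorem normalForm_surjective (n : ℕ) (t : Fin n → Fin n → Fin n → ℤ) :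
    Function.Surjective (N n t) := by
  intro x
  have hx : x ∈ closure (range (a n t)) := by
    rw [show a n t = PresentedGroup.of from rfl, PresentedGroup.closure_range_of]
    exact mem_top x
  exact (hasPolycyclicRelations_a t).closure_range_subset hx

end HallPoly
end

section
/- Let G be a group with a central series G = G_1 ≥ G_2 ≥ ⋯ ≥ G_n ≥ G_{n+1} = {1} and elements g_i ∈ G_i such that each factor G_i/G_{i+1} is infinite cyclic generated by the image of g_i. Then there exists a unique family of integers t = (t_{i,j,k})_{1 ≤ i < j < k ≤ n} such that g_j·g_i = g_i·g_j·g_{j+1}^{t_{i,j,j+1}} ⋯ g_n^{t_{i,j,n}} holds in G for all 1 ≤ i < j ≤ n. -/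
/-! Every `x ∈ H m` is uniquely an ordered product `g_m^{e_m} ⋯ g_{n-1}^{e_{n-1}}`: by downward
induction on `m`, the image of `x` in the infinite cyclic factor `H m ⧸ H (m + 1)` determines the
leading exponent, and the rest lies in `H (m + 1)`. As the series is central, the element
`(g_i g_j)⁻¹ (g_j g_i)` lies in `H (j + 1)`, and its exponents are the structure constants. -/

namespace HallPoly

lemma le_of_mem_drop_finRange {n m : ℕ} {k : Fin n} (h : k ∈ (List.finRange n).drop m) :
    m ≤ k := by
  obtain ⟨i, hi, rfl⟩ := List.mem_drop_iff_getElem.mp h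
  simp

lemma lt_of_mem_take_finRange {n m : ℕ} {k : Fin n} (h : k ∈ (List.finRange n).take m) :
    (k : ℕ) < m := by
  obtain ⟨i, hi, rfl⟩ := List.mem_take_iff_getElem.mp h
  simp only [List.getElem_finRange, Fin.val_cast]
  omega

section ProdFrom

variable {Γ : Type*} [Group Γ] {n : ℕ} (g : Fin n → Γ)

def prodFrom (m : ℕ) (e : Fin n → ℤ) : Γ :=
  (((List.finRange n).drop m).map fun k => g k ^ e k).prod

lemma prodFrom_of_le {m : ℕ} (hm : n ≤ m) (e : Fin n → ℤ) : prodFrom g m e = 1 := by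
  rw [prodFrom, List.drop_eq_nil_of_le (by simpa using hm), List.map_nil, List.prod_nil]

lemma prodFrom_eq_zpow_mul {m : ℕ} (hm : m < n) (e : Fin n → ℤ) :
    prodFrom g m e = g ⟨m, hm⟩ ^ e ⟨m, hm⟩ * prodFrom g (m + 1) e := by
  rw [prodFrom, List.drop_eq_getElem_cons (by simpa using hm), List.map_cons, List.prod_cons,
    List.getElem_finRange]
  rfl

lemma prodFrom_congr {m : ℕ} {e e' : Fin n → ℤ} (h : ∀ k : Fin n, m ≤ k → e k = e' k) :
    prodFrom g m e = prodFrom g m e' :=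
  congrArg List.prod <| List.map_congr_left fun k hk => by
    rw [h k (le_of_mem_drop_finRange hk)]

lemma prodPow_eq_prodFrom {m : ℕ} {e : Fin n → ℤ}
    (h : ∀ k : Fin n, (k : ℕ) < m → e k = 0) : prodPow n g e = prodFrom g m e := by
  have hhead : (((List.finRange n).take m).map fun k => g k ^ e k).prod = 1 :=
    List.prod_eq_one fun x hx => by
      obtain ⟨k, hk, rfl⟩ := List.mem_map.mp hx
      rw [h k (lt_of_mem_take_finRange hk), zpow_zero]
  rw [prodPow, ← List.take_append_drop m (List.finRange n), List.map_append, List.prod_append,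
    hhead, one_mul, prodFrom]

lemma prodPow_ite_lt (j : Fin n) (f : Fin n → ℤ) :
    prodPow n g (fun k => if j < k then f k else 0) = prodFrom g (j + 1) f := by
  rw [prodPow_eq_prodFrom g (m := j + 1) fun k hk => if_neg (by rw [Fin.lt_def]; omega)]
  exact prodFrom_congr g fun k hk => if_pos (by rw [Fin.lt_def]; omega)

end ProdFrom

section CyclicFactor

variable {Γ : Type*} [Group Γ] {A B : Subgroup Γ} {a : Γ} (ha : a ∈ A)

include ha in
lemma exists_inv_zpow_mul_mem
    (hsurj : Function.Surjective fun m : ℤ =>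
      (QuotientGroup.mk ((⟨a, ha⟩ : A) ^ m) : A ⧸ B.subgroupOf A))
    {x : Γ} (hx : x ∈ A) : ∃ m : ℤ, (a ^ m)⁻¹ * x ∈ B := by
  obtain ⟨m, hm⟩ := hsurj (QuotientGroup.mk ⟨x, hx⟩)
  exact ⟨m, by simpa [Subgroup.mem_subgroupOf] using QuotientGroup.eq.mp hm⟩

include ha in
lemma eq_of_zpow_mul_eq_zpow_mul
    (hinj : Function.Injective fun m : ℤ =>
      (QuotientGroup.mk ((⟨a, ha⟩ : A) ^ m) : A ⧸ B.subgroupOf A))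
    {k l : ℤ} {p q : Γ} (hp : p ∈ B) (hq : q ∈ B) (h : a ^ k * p = a ^ l * q) : k = l := by
  have hkl : (a ^ k)⁻¹ * a ^ l = p * q⁻¹ := by
    rw [inv_mul_eq_iff_eq_mul, ← mul_assoc, h, mul_inv_cancel_right]
  refine hinj (QuotientGroup.eq.mpr ?_)
  rw [Subgroup.mem_subgroupOf]
  simpa [hkl] using mul_mem hp (inv_mem hq)

end CyclicFactor

open scoped commutatorElement in
lemma inv_mul_mul_comm_mem {Γ : Type*} [Group Γ] {K L : Subgroup Γ}
    (hKL : ⁅(⊤ : Subgroup Γ), K⁆ ≤ L) {x : Γ} (hx : x ∈ K) (y : Γ) : (y * x)⁻¹ * (x * y) ∈ L := by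
  have hxy : ⁅x⁻¹, y⁻¹⁆ ∈ ⁅(⊤ : Subgroup Γ), K⁆ := by
    rw [Subgroup.commutator_comm]
    exact Subgroup.commutator_mem_commutator (inv_mem hx) (Subgroup.mem_top _)
  simpa [commutatorElement_def, mul_assoc] using hKL hxy

section Coordinates

variable {Γ : Type*} [Group Γ] {n : ℕ} (g : Fin n → Γ) (H : ℕ → Subgroup Γ)
  (hdesc : ∀ i : ℕ, i < n → H (i + 1) ≤ H i) (hg : ∀ i : Fin n, g i ∈ H (i : ℕ))

include hdesc hg in
lemma prodFrom_mem {m : ℕ} (hm : m ≤ n) (e : Fin n → ℤ) : prodFrom g m e ∈ H m := by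
  induction hm using Nat.decreasingInduction with
  | self => rw [prodFrom_of_le g le_rfl]; exact one_mem _
  | of_succ k hk ih =>
    rw [prodFrom_eq_zpow_mul g hk]
    exact mul_mem (zpow_mem (hg ⟨k, hk⟩) _) (hdesc k hk ih)

include hdesc in
lemma eq_of_prodFrom_eq
    (hinj : ∀ i : Fin n, Function.Injective fun m : ℤ =>
      (QuotientGroup.mk ((⟨g i, hg i⟩ : H (i : ℕ)) ^ m) :
        H (i : ℕ) ⧸ (H ((i : ℕ) + 1)).subgroupOf (H (i : ℕ))))
    {m : ℕ} (hm : m ≤ n) {e e' : Fin n → ℤ} (h : prodFrom g m e = prodFrom g m e') :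
    ∀ k : Fin n, m ≤ k → e k = e' k := by
  induction hm using Nat.decreasingInduction with
  | self => exact fun k hk => absurd k.isLt (by omega)
  | of_succ m hm ih =>
    rw [prodFrom_eq_zpow_mul g hm, prodFrom_eq_zpow_mul g hm] at h
    have hhead := eq_of_zpow_mul_eq_zpow_mul (hg _) (hinj ⟨m, hm⟩)
      (prodFrom_mem g H hdesc hg hm _) (prodFrom_mem g H hdesc hg hm _) h
    rw [hhead, mul_right_inj] at h
    intro k hk
    rcases hk.eq_or_lt with hk | hk
    · rwa [show k = ⟨m, hm⟩ from Fin.ext hk.symm]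
    · exact ih h k hk

lemma exists_prodFrom_eq (hHn : H n = ⊥)
    (hsurj : ∀ i : Fin n, Function.Surjective fun m : ℤ =>
      (QuotientGroup.mk ((⟨g i, hg i⟩ : H (i : ℕ)) ^ m) :
        H (i : ℕ) ⧸ (H ((i : ℕ) + 1)).subgroupOf (H (i : ℕ))))
    {m : ℕ} (hm : m ≤ n) {x : Γ} (hx : x ∈ H m) :
    ∃ e : Fin n → ℤ, prodFrom g m e = x := by
  induction hm using Nat.decreasingInduction generalizing x with
  | self =>
    rw [hHn, Subgroup.mem_bot] at hx
    exact ⟨0, hx ▸ prodFrom_of_le g le_rfl 0⟩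
  | of_succ m hm ih =>
    obtain ⟨ε, hε⟩ := exists_inv_zpow_mul_mem (hg _) (hsurj ⟨m, hm⟩) hx
    obtain ⟨e, he⟩ := ih hε
    refine ⟨Function.update e ⟨m, hm⟩ ε, ?_⟩
    have htail : prodFrom g (m + 1) (Function.update e ⟨m, hm⟩ ε) = prodFrom g (m + 1) e :=
      prodFrom_congr g fun k hk =>
        Function.update_of_ne (fun h => by rw [h] at hk; simp at hk) _ _
    rw [prodFrom_eq_zpow_mul g hm, htail, he, Function.update_self, mul_inv_cancel_left]

end Coordinates

theorem exists_unique_structure_constants_general {Γ : Type*} [Group Γ] (n : ℕ)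
    (H : ℕ → Subgroup Γ)
    (hHn : H n = ⊥)
    (hdesc : ∀ i : ℕ, i < n → H (i + 1) ≤ H i)
    (hcentral : ∀ i : ℕ, i < n → ⁅(⊤ : Subgroup Γ), H i⁆ ≤ H (i + 1))
    (g : Fin n → Γ) (hg : ∀ i : Fin n, g i ∈ H (i : ℕ))
    (hcyc : ∀ i : Fin n, Function.Bijective fun m : ℤ =>
      (QuotientGroup.mk ((⟨g i, hg i⟩ : H (i : ℕ)) ^ m) :
        H (i : ℕ) ⧸ (H ((i : ℕ) + 1)).subgroupOf (H (i : ℕ)))) :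
    ∃ t : Fin n → Fin n → Fin n → ℤ,
      (∀ i j : Fin n, i < j →
        g j * g i = g i * g j * prodPow n g (fun k => if j < k then t i j k else 0)) ∧
      ∀ t' : Fin n → Fin n → Fin n → ℤ,
        (∀ i j : Fin n, i < j →
          g j * g i = g i * g j * prodPow n g (fun k => if j < k then t' i j k else 0)) →
        ∀ i j k : Fin n, i < j → j < k → t' i j k = t i j k := by
  choose t ht using fun i j : Fin n => exists_prodFrom_eq g H hg hHn (fun i => (hcyc i).2)
    j.isLt (inv_mul_mul_comm_mem (hcentral j j.isLt) (hg j) (g i))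
  refine ⟨t, fun i j _ => by rw [prodPow_ite_lt, ht, mul_inv_cancel_left], ?_⟩
  intro t' ht' i j k hij hjk
  have hrel : prodFrom g (j + 1) (t' i j) = prodFrom g (j + 1) (t i j) := by
    rw [ht, ← prodPow_ite_lt, eq_inv_mul_iff_mul_eq, ht' i j hij]
  exact eq_of_prodFrom_eq g H hdesc hg (fun i => (hcyc i).1) j.isLt hrel k hjk

/-- If `Γ = H_1 ≥ H_2 ≥ ⋯ ≥ H_n ≥ H_{n+1} = {1}` is a central series (0-based: `H 0 = Γ`,
`H n = {1}`) with elements `g_i ∈ H_i` such that each factor `H_i / H_{i+1}` is infinite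
cyclic generated by the image of `g_i`, then there is a unique family of integers
`t = (t_{i,j,k})_{i < j < k}` with `g_j·g_i = g_i·g_j·g_{j+1}^{t_{i,j,j+1}} ⋯ g_n^{t_{i,j,n}}`
for all `i < j`. -/
theorem exists_unique_structure_constants {Γ : Type*} [Group Γ] (n : ℕ)
    (H : ℕ → Subgroup Γ)
    (hH0 : H 0 = ⊤) (hHn : H n = ⊥)
    (hdesc : ∀ i : ℕ, i < n → H (i + 1) ≤ H i)
    (hnormal : ∀ i : ℕ, (H i).Normal)
    (hcentral : ∀ i : ℕ, i < n → ⁅(⊤ : Subgroup Γ), H i⁆ ≤ H (i + 1))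
    (g : Fin n → Γ) (hg : ∀ i : Fin n, g i ∈ H (i : ℕ))
    (hcyc : ∀ i : Fin n, Function.Bijective fun m : ℤ =>
      (QuotientGroup.mk ((⟨g i, hg i⟩ : H (i : ℕ)) ^ m) :
        H (i : ℕ) ⧸ (H ((i : ℕ) + 1)).subgroupOf (H (i : ℕ)))) :
    ∃ t : Fin n → Fin n → Fin n → ℤ,
      (∀ i j : Fin n, i < j →
        g j * g i = g i * g j * prodPow n g (fun k => if j < k then t i j k else 0)) ∧
      ∀ t' : Fin n → Fin n → Fin n → ℤ,
        (∀ i j : Fin n, i < j →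
          g j * g i = g i * g j * prodPow n g (fun k => if j < k then t' i j k else 0)) →
        ∀ i j k : Fin n, i < j → j < k → t' i j k = t i j k :=
  exists_unique_structure_constants_general n H hHn hdesc hcentral g hg hcyc

end HallPoly
end
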